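/- Let n ≥ 1. The symmetric canonical elements for the integer lattice 𝔍_Spin of Spin(2n+1) are precisely the elements ξ_I = Σ_{i∈I} H_i and ξ_I + 2H_j, where I ranges over subsets of {1,…,n} with Σ_{i∈I} i even and j ranges over the odd elements of {1,…,n}. -/

import Mathlib

/-!
Write `ξ = Σ cᵢ Hᵢ`. Its `j`-th coordinate is the tail sum `c_{j+1} + ⋯ + c_n`, so `ξ ∈ 𝔍_Spin`
iff the weight `Σ i cᵢ` is even, and `ξ ∈ 2𝔍_Spin` iff `c = 2d` with `Σ i dᵢ` even. Hence `ξ` is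
symmetric canonical iff `Σ i cᵢ` is even and no nonzero `d` with `2d ≤ c` has even weight.
Testing `d = eᵢ` (`i` even), `d = 2eᵢ` and `d = eᵢ + eₖ` (`i, k` odd) forces `cᵢ ≤ 1` for all
`i` but at most one odd `j`, where `c_j ≤ 3`: these are the coefficients of `ξ_I` and `ξ_I + 2H_j`.
Conversely, for such `c` any admissible `d` lives on the odd index `j` with `d_j ≤ 1`, and
`d_j j` even forces `d_j = 0`.
-/

/-- `H_i = E_1 + ⋯ + E_i` for `so(2n+1)` (1-based index `i`). -/
def Hspin (n i : ℕ) : Fin n → ℝ := fun j => if (j : ℕ) + 1 ≤ i then 1 else 0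

/-- The integer lattice of `Spin(2n+1)`: integer vectors with even coordinate sum. -/
def JSpin (n : ℕ) : Set (Fin n → ℝ) :=
  {v | ∃ a : Fin n → ℤ, (∀ j, v j = a j) ∧ Even (∑ j, a j)}

/-- The set of symmetric canonical elements for a lattice `𝔏 ⊆ ℝ^n`:
elements `ξ = Σ_{i=1}^n n_i H_i` with nonnegative integer `n_i`, `ξ ∈ 𝔏`, such that
there is no `ξ' = Σ n'_i H_i ∈ 𝔏` with `n'_i ≤ n_i`, `ξ' ≠ ξ` and `ξ - ξ' ∈ 2𝔏`. -/
def SymCanonSet (n : ℕ) (𝔏 : Set (Fin n → ℝ)) (H : ℕ → Fin n → ℝ) :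
    Set (Fin n → ℝ) :=
  {ξ | ∃ c : ℕ → ℕ, ξ = ∑ i ∈ Finset.Icc 1 n, c i • H i ∧ ξ ∈ 𝔏 ∧
    ∀ c' : ℕ → ℕ, (∀ i ∈ Finset.Icc 1 n, c' i ≤ c i) →
      (∑ i ∈ Finset.Icc 1 n, c' i • H i) ∈ 𝔏 →
      (ξ - ∑ i ∈ Finset.Icc 1 n, c' i • H i) ∈ (fun v => (2 : ℝ) • v) '' 𝔏 →
      (∑ i ∈ Finset.Icc 1 n, c' i • H i) = ξ}

open Finset

def hspinComb (n : ℕ) (c : ℕ → ℕ) : Fin n → ℝ := ∑ i ∈ Icc 1 n, c i • Hspin n i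

def tailSum (n : ℕ) (c : ℕ → ℕ) (k : ℕ) : ℕ := ∑ i ∈ Ioc k n, c i

def coeffWeight (n : ℕ) (c : ℕ → ℕ) : ℕ := ∑ i ∈ Icc 1 n, c i * i

section Coordinates

variable {n : ℕ} {c c' : ℕ → ℕ}

lemma tailSum_of_le {k : ℕ} (hk : n ≤ k) : tailSum n c k = 0 := by
  rw [tailSum, Ioc_eq_empty (by omega), sum_empty]

lemma tailSum_eq_add {k : ℕ} (hk : k < n) : tailSum n c k = c (k + 1) + tailSum n c (k + 1) := by
  rw [tailSum, ← insert_Ioc_add_one_left_eq_Ioc hk, sum_insert (by simp)]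
  rfl

lemma hspinComb_apply (j : Fin n) : hspinComb n c j = tailSum n c j := by
  have hfilter : (Icc 1 n).filter (fun i => (j : ℕ) + 1 ≤ i) = Ioc (j : ℕ) n := by
    ext i; simp only [mem_filter, mem_Icc, mem_Ioc]; omega
  simp only [hspinComb, Finset.sum_apply, Pi.smul_apply]
  simp only [Hspin, smul_ite, smul_zero, nsmul_eq_mul, mul_one]
  rw [← sum_filter, hfilter, tailSum, Nat.cast_sum]

lemma hspinComb_congr (h : Set.EqOn c c' (Icc 1 n)) : hspinComb n c = hspinComb n c' :=
  sum_congr rfl fun i hi => by rw [h hi]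

lemma hspinComb_add : hspinComb n (c + c') = hspinComb n c + hspinComb n c' := by
  simp only [hspinComb, Pi.add_apply, add_smul, sum_add_distrib]

lemma hspinComb_two_nsmul : hspinComb n (2 • c) = (2 : ℝ) • hspinComb n c := by
  simp only [hspinComb, smul_sum, Pi.smul_apply, smul_eq_mul, mul_smul, ofNat_smul_eq_nsmul]

lemma eqOn_of_tailSum_eq (h : ∀ k < n, tailSum n c k = tailSum n c' k) :
    Set.EqOn c c' (Icc 1 n) := by
  intro i hi
  obtain ⟨k, rfl⟩ : ∃ k, i = k + 1 := ⟨i - 1, by simp at hi; omega⟩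
  have hk : k < n := by simp at hi; omega
  have hsucc : tailSum n c (k + 1) = tailSum n c' (k + 1) := by
    rcases Nat.lt_or_ge (k + 1) n with hk' | hk'
    · exact h _ hk'
    · rw [tailSum_of_le hk', tailSum_of_le hk']
  have := h k hk
  rw [tailSum_eq_add hk, tailSum_eq_add hk] at this
  omega

lemma eqOn_of_hspinComb_eq (h : hspinComb n c = hspinComb n c') : Set.EqOn c c' (Icc 1 n) :=
  eqOn_of_tailSum_eq fun k hk => by
    exact_mod_cast (hspinComb_apply ⟨k, hk⟩).symm.trans ((congrFun h _).trans (hspinComb_apply _))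

lemma sum_tailSum_eq_coeffWeight : ∑ j : Fin n, tailSum n c j = coeffWeight n c := by
  rw [Fin.sum_univ_eq_sum_range (tailSum n c), coeffWeight]
  simp only [tailSum]
  rw [sum_comm' (t' := Icc 1 n) (s' := range) fun j i => by
    simp only [mem_range, mem_Ioc, mem_Icc]; omega]
  simp [mul_comm]

end Coordinates

section Lattice

variable {n : ℕ} {c : ℕ → ℕ}

lemma hspinComb_mem_JSpin_iff : hspinComb n c ∈ JSpin n ↔ Even (coeffWeight n c) := by
  have hsum : ∑ j : Fin n, (tailSum n c j : ℤ) = coeffWeight n c := by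
    exact_mod_cast sum_tailSum_eq_coeffWeight
  constructor
  · rintro ⟨a, ha, hev⟩
    have hcoord : ∀ j, a j = (tailSum n c j : ℤ) := fun j => by
      exact_mod_cast (ha j).symm.trans (hspinComb_apply j)
    rw [Fintype.sum_congr _ _ hcoord, hsum] at hev
    exact_mod_cast hev
  · intro hev
    refine ⟨fun j => tailSum n c j, fun j => by simp [hspinComb_apply], ?_⟩
    rw [hsum]
    exact_mod_cast hev

lemma even_of_even_tailSum (h : ∀ k < n, Even (tailSum n c k)) : ∀ i ∈ Icc 1 n, Even (c i) := by
  intro i hi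
  obtain ⟨k, rfl⟩ : ∃ k, i = k + 1 := ⟨i - 1, by simp at hi; omega⟩
  have hk : k < n := by simp at hi; omega
  have hsucc : Even (tailSum n c (k + 1)) := by
    rcases Nat.lt_or_ge (k + 1) n with hk' | hk'
    · exact h _ hk'
    · rw [tailSum_of_le hk']; exact Even.zero
  have := h k hk
  rw [tailSum_eq_add hk] at this
  exact (Nat.even_add.1 this).2 hsucc

lemma hspinComb_mem_two_smul_JSpin_iff :
    hspinComb n c ∈ (fun v => (2 : ℝ) • v) '' JSpin n ↔
      ∃ d, Set.EqOn c (2 • d) (Icc 1 n) ∧ Even (coeffWeight n d) := by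
  constructor
  · rintro ⟨v, hvJ, hv⟩
    obtain ⟨a, ha, -⟩ := id hvJ
    have htail : ∀ k < n, Even (tailSum n c k) := fun k hk => by
      have hcoord : ((tailSum n c k : ℤ) : ℝ) = ((2 * a ⟨k, hk⟩ : ℤ) : ℝ) := by
        rw [Int.cast_natCast, ← hspinComb_apply ⟨k, hk⟩, ← hv]
        simp [ha]
      have : Even (tailSum n c k : ℤ) := ⟨a ⟨k, hk⟩, by rw [Int.cast_inj.1 hcoord]; ring⟩
      exact_mod_cast this
    have hc : Set.EqOn c (2 • fun i => c i / 2) (Icc 1 n) := fun i hi =>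
      (Nat.two_mul_div_two_of_even (even_of_even_tailSum htail i hi)).symm
    refine ⟨_, hc, hspinComb_mem_JSpin_iff.1 ?_⟩
    rwa [← smul_right_injective _ two_ne_zero (hv.trans ((hspinComb_congr hc).trans
      hspinComb_two_nsmul))]
  · rintro ⟨d, hcd, hd⟩
    exact ⟨hspinComb n d, hspinComb_mem_JSpin_iff.2 hd,
      by rw [hspinComb_congr hcd, hspinComb_two_nsmul]⟩

end Lattice

section Weight

variable {n : ℕ} {c c' : ℕ → ℕ}

lemma coeffWeight_congr (h : Set.EqOn c c' (Icc 1 n)) : coeffWeight n c = coeffWeight n c' :=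
  sum_congr rfl fun i hi => by rw [h hi]

lemma coeffWeight_add : coeffWeight n (c + c') = coeffWeight n c + coeffWeight n c' := by
  simp only [coeffWeight, Pi.add_apply, add_mul, sum_add_distrib]

lemma coeffWeight_two_nsmul : coeffWeight n (2 • c) = 2 * coeffWeight n c := by
  simp only [coeffWeight, mul_sum, Pi.smul_apply, smul_eq_mul, mul_assoc]

end Weight

def NoEvenHalf (n : ℕ) (c : ℕ → ℕ) : Prop :=
  ∀ d : ℕ → ℕ, (∀ i ∈ Icc 1 n, 2 * d i ≤ c i) → Even (coeffWeight n d) → ∀ i ∈ Icc 1 n, d i = 0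

lemma mem_symCanonSet_JSpin_iff {n : ℕ} {ξ : Fin n → ℝ} :
    ξ ∈ SymCanonSet n (JSpin n) (Hspin n) ↔
      ∃ c, ξ = hspinComb n c ∧ Even (coeffWeight n c) ∧ NoEvenHalf n c := by
  constructor
  · rintro ⟨c, rfl, hmem, hmax⟩
    refine ⟨c, rfl, hspinComb_mem_JSpin_iff.1 hmem, fun d hdc hd i hi => ?_⟩
    have hc : Set.EqOn c ((c - 2 • d) + 2 • d) (Icc 1 n) := fun i hi => by
      simp only [Pi.add_apply, Pi.sub_apply, Pi.smul_apply, smul_eq_mul]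
      have := hdc i hi; omega
    have hle : ∀ i ∈ Icc 1 n, (c - 2 • d) i ≤ c i := fun i _ => Nat.sub_le _ _
    have hmem' : hspinComb n (c - 2 • d) ∈ JSpin n := by
      rw [hspinComb_mem_JSpin_iff]
      have hw := hspinComb_mem_JSpin_iff.1 hmem
      rw [coeffWeight_congr hc, coeffWeight_add, coeffWeight_two_nsmul] at hw
      exact (Nat.even_add.1 hw).2 (hd.mul_left 2)
    have hsub : hspinComb n c - hspinComb n (c - 2 • d) ∈ (fun v => (2 : ℝ) • v) '' JSpin n := by
      rw [hspinComb_congr hc, hspinComb_add, add_sub_cancel_left]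
      exact hspinComb_mem_two_smul_JSpin_iff.2 ⟨d, fun _ _ => rfl, hd⟩
    have := eqOn_of_hspinComb_eq (hmax _ hle hmem' hsub) hi
    have := hc hi
    simp only [Pi.add_apply, Pi.sub_apply, Pi.smul_apply, smul_eq_mul] at *
    omega
  · rintro ⟨c, rfl, hev, hnoHalf⟩
    refine ⟨c, rfl, hspinComb_mem_JSpin_iff.2 hev, fun c' hle _ hsub => ?_⟩
    have hc : Set.EqOn c (c' + (c - c')) (Icc 1 n) := fun i hi => by
      simp only [Pi.add_apply, Pi.sub_apply]
      have := hle i hi; omega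
    change hspinComb n c - hspinComb n c' ∈ _ at hsub
    rw [hspinComb_congr hc, hspinComb_add, add_sub_cancel_left,
      hspinComb_mem_two_smul_JSpin_iff] at hsub
    obtain ⟨d, hcd, hd⟩ := hsub
    have hd0 := hnoHalf d (fun i hi => by
      have := hcd hi; have := hc hi
      simp only [Pi.add_apply, Pi.sub_apply, Pi.smul_apply, smul_eq_mul] at *
      omega) hd
    refine (hspinComb_congr fun i hi => ?_).symm.trans rfl
    have := hcd hi; have := hc hi; have := hd0 i hi
    simp only [Pi.add_apply, Pi.sub_apply, Pi.smul_apply, smul_eq_mul] at *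
    omega

/-- The coefficients of `ξ_I + 2 H_j`; since `0` is not an index, `j = 0` gives those of `ξ_I`. -/
def canonCoeff (I : Finset ℕ) (j : ℕ) : ℕ → ℕ :=
  fun i => (if i ∈ I then 1 else 0) + (if i = j then 2 else 0)

lemma sum_canonCoeff_smul {M : Type*} [AddCommMonoid M] {s I : Finset ℕ} (hI : I ⊆ s) (j : ℕ)
    (f : ℕ → M) :
    ∑ i ∈ s, canonCoeff I j i • f i = ∑ i ∈ I, f i + if j ∈ s then 2 • f j else 0 := by
  simp only [canonCoeff, add_smul, sum_add_distrib, ite_smul, one_smul, zero_smul]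
  rw [sum_ite_mem, inter_eq_right.2 hI, sum_ite_eq']

lemma coeffWeight_canonCoeff {n : ℕ} {I : Finset ℕ} (hI : I ⊆ Icc 1 n) (j : ℕ) :
    coeffWeight n (canonCoeff I j) = ∑ i ∈ I, i + if j ∈ Icc 1 n then 2 * j else 0 := by
  simpa [coeffWeight] using sum_canonCoeff_smul hI j id

lemma coeffWeight_single {n i : ℕ} (hi : i ∈ Icc 1 n) (m : ℕ) :
    coeffWeight n (Pi.single i m) = m * i := by
  rw [coeffWeight, sum_eq_single_of_mem i hi fun k _ hki => by simp [hki], Pi.single_eq_same]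

lemma noEvenHalf_canonCoeff {n j : ℕ} (I : Finset ℕ) (hj : j = 0 ∨ j ∈ Icc 1 n ∧ Odd j) :
    NoEvenHalf n (canonCoeff I j) := by
  intro d hd heven
  have hoff : ∀ i ∈ Icc 1 n, i ≠ j → d i = 0 := fun i hi hij => by
    have := hd i hi
    simp only [canonCoeff, if_neg hij] at this
    split_ifs at this <;> omega
  rcases hj with rfl | ⟨hj, hjodd⟩
  · exact fun i hi => hoff i hi (by simp at hi; omega)
  · have hdj : d j = 0 := by
      have hle : d j ≤ 1 := by
        have := hd j hj
        simp only [canonCoeff] at this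
        split_ifs at this <;> omega
      rw [coeffWeight, sum_eq_single_of_mem j hj fun i hi hij => by rw [hoff i hi hij, zero_mul],
        Nat.even_mul] at heven
      rcases heven with heven | heven
      · obtain ⟨t, ht⟩ := heven; omega
      · exact absurd heven (Nat.not_even_iff_odd.2 hjodd)
    intro i hi
    by_cases hij : i = j
    · rw [hij, hdj]
    · exact hoff i hi hij

namespace NoEvenHalf

variable {n : ℕ} {c : ℕ → ℕ}

lemma single_eq_zero (h : NoEvenHalf n c) {i m : ℕ} (hi : i ∈ Icc 1 n) (hm : 2 * m ≤ c i)
    (heven : Even (m * i)) : m = 0 := by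
  have := h (Pi.single i m) (fun k _ => by
    by_cases hki : k = i
    · subst hki; simpa using hm
    · simp [hki]) (by rwa [coeffWeight_single hi]) i hi
  simpa using this

lemma le_one_of_even (h : NoEvenHalf n c) {i : ℕ} (hi : i ∈ Icc 1 n) (he : Even i) : c i ≤ 1 := by
  by_contra! hci
  exact one_ne_zero (h.single_eq_zero hi (by omega) (by simpa using he))

lemma le_three (h : NoEvenHalf n c) {i : ℕ} (hi : i ∈ Icc 1 n) : c i ≤ 3 := by
  by_contra! hci
  exact two_ne_zero (h.single_eq_zero hi (by omega) (even_two.mul_right i))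

lemma odd_of_two_le (h : NoEvenHalf n c) {i : ℕ} (hi : i ∈ Icc 1 n) (hci : 2 ≤ c i) : Odd i :=
  Nat.not_even_iff_odd.1 fun he => by have := h.le_one_of_even hi he; omega

lemma eq_of_two_le (h : NoEvenHalf n c) {i k : ℕ} (hi : i ∈ Icc 1 n) (hk : k ∈ Icc 1 n)
    (hci : 2 ≤ c i) (hck : 2 ≤ c k) : i = k := by
  by_contra hik
  have hd := h (Pi.single i 1 + Pi.single k 1) (fun m _ => by
    simp only [Pi.add_apply, Pi.single_apply]
    split_ifs with hmi hmk <;> subst_vars <;> omega)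
    (by
      rw [coeffWeight_add, coeffWeight_single hi, coeffWeight_single hk, one_mul, one_mul]
      exact (h.odd_of_two_le hi hci).add_odd (h.odd_of_two_le hk hck)) i hi
  simp [hik] at hd

lemma exists_eqOn_canonCoeff (h : NoEvenHalf n c) :
    ∃ I ⊆ Icc 1 n, ∃ j, (j = 0 ∨ j ∈ Icc 1 n ∧ Odd j) ∧ Set.EqOn c (canonCoeff I j) (Icc 1 n) := by
  obtain ⟨j, hj, hbound⟩ : ∃ j, (j = 0 ∨ j ∈ Icc 1 n ∧ Odd j) ∧
      ∀ i ∈ Icc 1 n, if i = j then 2 ≤ c i ∧ c i ≤ 3 else c i ≤ 1 := by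
    by_cases hbig : ∃ j ∈ Icc 1 n, 2 ≤ c j
    · obtain ⟨j, hj, hcj⟩ := hbig
      refine ⟨j, Or.inr ⟨hj, h.odd_of_two_le hj hcj⟩, fun i hi => ?_⟩
      split_ifs with hij
      · exact ⟨hij ▸ hcj, h.le_three hi⟩
      · by_contra! hci
        exact hij (h.eq_of_two_le hi hj hci hcj)
    · push Not at hbig
      refine ⟨0, Or.inl rfl, fun i hi => ?_⟩
      rw [if_neg (by simp at hi; omega)]
      exact Nat.le_of_lt_succ (hbig i hi)
  refine ⟨(Icc 1 n).filter fun i => Odd (c i), filter_subset _ _, j, hj, fun i hi => ?_⟩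
  have := hbound i hi
  simp only [canonCoeff, mem_filter, mem_coe.1 hi, true_and, Nat.odd_iff]
  split_ifs at * <;> omega

end NoEvenHalf

theorem spin_odd_symmetric_canonical (n : ℕ) :
    SymCanonSet n (JSpin n) (Hspin n) =
      {ξ | ∃ I : Finset ℕ, I ⊆ Finset.Icc 1 n ∧ Even (∑ i ∈ I, i) ∧
        (ξ = ∑ i ∈ I, Hspin n i ∨
          ∃ j ∈ Finset.Icc 1 n, Odd j ∧
            ξ = (∑ i ∈ I, Hspin n i) + (2 : ℕ) • Hspin n j)} := by
  have h0 : 0 ∉ Icc 1 n := by simp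
  ext ξ
  rw [mem_symCanonSet_JSpin_iff]
  constructor
  · rintro ⟨c, rfl, heven, hc⟩
    obtain ⟨I, hI, j, hj, hcI⟩ := hc.exists_eqOn_canonCoeff
    rw [coeffWeight_congr hcI, coeffWeight_canonCoeff hI] at heven
    rw [hspinComb_congr hcI, hspinComb, sum_canonCoeff_smul hI]
    rcases hj with rfl | ⟨hj, hjodd⟩
    · rw [if_neg h0] at heven ⊢
      exact ⟨I, hI, heven, Or.inl (add_zero _)⟩
    · rw [if_pos hj] at heven ⊢
      exact ⟨I, hI, (Nat.even_add.1 heven).2 (even_two_mul j), Or.inr ⟨j, hj, hjodd, rfl⟩⟩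
  · rintro ⟨I, hI, hIeven, rfl | ⟨j, hj, hjodd, rfl⟩⟩
    · refine ⟨canonCoeff I 0, ?_, ?_, noEvenHalf_canonCoeff I (Or.inl rfl)⟩
      · rw [hspinComb, sum_canonCoeff_smul hI, if_neg h0, add_zero]
      · rwa [coeffWeight_canonCoeff hI, if_neg h0, add_zero]
    · refine ⟨canonCoeff I j, ?_, ?_, noEvenHalf_canonCoeff I (Or.inr ⟨hj, hjodd⟩)⟩
      · rw [hspinComb, sum_canonCoeff_smul hI, if_pos hj]
      · rw [coeffWeight_canonCoeff hI, if_pos hj]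
        exact hIeven.add (even_two_mul j)
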